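/- Let W̄, W_1, …, W_L ∈ ℝ^{D×D}, set E := W̄ − ∏_{l=1}^{L} W_l, and fix R ∈ {1, …, D}. Assume W_1, …, W_L are non-singular and that ∏_{l=1}^{L} W_l + α_r(E) is non-singular for every integer 0 ≤ r ≤ R(L−1). Then the minimum of ‖∏_{l=1}^{L}(W_l + ΔW_l) − W̄‖₂ over all ΔW_1, …, ΔW_L ∈ ℝ^{D×D} with rank(ΔW_l) ≤ R for every l is attained and equals σ_{RL+1}(E), where ‖·‖₂ is the spectral (operator 2-) norm. -/

import Mathlib

open Matrix Finset

noncomputable section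

/-- Ordered matrix product `W_b * W_{b-1} * ⋯ * W_a` (larger indices on the
left); the identity matrix when `a > b`. -/
def mprod {D : ℕ} (W : ℕ → Matrix (Fin D) (Fin D) ℝ) (a b : ℕ) :
    Matrix (Fin D) (Fin D) ℝ :=
  (((List.range' a (b + 1 - a)).map W).reverse).prod

/-- A singular value decomposition of a square real matrix: `W = U Σ Vᵀ` with
`U, V` orthogonal and singular values in descending order, recorded 0-indexed
(`σ 0` is the paper's `σ_1`) and extended by zero from index `D` on. -/
structure SVD {D : ℕ} (W : Matrix (Fin D) (Fin D) ℝ) where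
  U : Matrix (Fin D) (Fin D) ℝ
  V : Matrix (Fin D) (Fin D) ℝ
  σ : ℕ → ℝ
  hU : Uᵀ * U = 1
  hV : Vᵀ * V = 1
  nonneg : ∀ i, 0 ≤ σ i
  anti : ∀ i j, i ≤ j → σ j ≤ σ i
  tail_zero : ∀ i, D ≤ i → σ i = 0
  decomp : W = U * Matrix.diagonal (fun i : Fin D => σ i) * Vᵀ

/-- `s.trunc r` is the best rank-`r` approximation `α_r(W)` obtained by
truncating the singular value decomposition `s` of `W` to its `r` largest
singular values. -/
def SVD.trunc {D : ℕ} {W : Matrix (Fin D) (Fin D) ℝ} (s : SVD W) (r : ℕ) :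
    Matrix (Fin D) (Fin D) ℝ :=
  s.U * Matrix.diagonal (fun i : Fin D => if (i : ℕ) < r then s.σ i else 0) * s.Vᵀ

/-- Euclidean norm of a vector in `ℝ^D`. -/
def vnorm {D : ℕ} (x : Fin D → ℝ) : ℝ := Real.sqrt (∑ i, x i ^ 2)

/-- Spectral (operator 2-) norm of a matrix: the supremum of `‖A x‖₂` over the
Euclidean unit ball. -/
def mspectralNorm {D : ℕ} (A : Matrix (Fin D) (Fin D) ℝ) : ℝ :=
  sSup {c : ℝ | ∃ x : Fin D → ℝ, vnorm x ≤ 1 ∧ c = vnorm (A.mulVec x)}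

/-! ### Auxiliary lemmas about `mprod` -/

lemma mprod_nil {D : ℕ} (W : ℕ → Matrix (Fin D) (Fin D) ℝ) {a b : ℕ} (h : b < a) :
    mprod W a b = 1 := by
  unfold mprod
  rw [Nat.sub_eq_zero_of_le h]
  simp

lemma mprod_succ {D : ℕ} (W : ℕ → Matrix (Fin D) (Fin D) ℝ) {a b : ℕ} (h : a ≤ b + 1) :
    mprod W a (b + 1) = W (b + 1) * mprod W a b := by
  unfold mprod
  have h1 : b + 1 + 1 - a = (b + 1 - a) + 1 := by omega
  have h2 : a + 1 * (b + 1 - a) = b + 1 := by omega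
  rw [h1, List.range'_concat, h2, List.map_append, List.reverse_append]
  simp

lemma mprod_cons {D : ℕ} (W : ℕ → Matrix (Fin D) (Fin D) ℝ) {a b : ℕ} (h : a ≤ b) :
    mprod W a b = mprod W (a + 1) b * W a := by
  unfold mprod
  have h1 : b + 1 - a = (b + 1 - (a + 1)) + 1 := by omega
  rw [h1, List.range'_succ, List.map_cons, List.reverse_cons, List.prod_append]
  simp

lemma det_mprod_ne_zero {D : ℕ} (W : ℕ → Matrix (Fin D) (Fin D) ℝ) {a b : ℕ}
    (ha : 1 ≤ a) (h : ∀ l ∈ Finset.Icc a b, (W l).det ≠ 0) :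
    (mprod W a b).det ≠ 0 := by
  induction b with
  | zero =>
    rw [mprod_nil W (by omega)]
    simp
  | succ n ih =>
    by_cases hab : a ≤ n + 1
    · rw [mprod_succ W hab, Matrix.det_mul]
      exact mul_ne_zero (h (n + 1) (Finset.mem_Icc.mpr ⟨hab, le_refl _⟩))
        (ih fun l hl => h l (by rw [Finset.mem_Icc] at hl ⊢; omega))
    · rw [mprod_nil W (by omega)]
      simp

/-! ### Auxiliary lemmas about `vnorm` -/

lemma vnorm_nonneg {D : ℕ} (x : Fin D → ℝ) : 0 ≤ vnorm x := Real.sqrt_nonneg _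

lemma vnorm_sq {D : ℕ} (x : Fin D → ℝ) : vnorm x ^ 2 = ∑ i, x i ^ 2 :=
  Real.sq_sqrt (Finset.sum_nonneg fun _ _ => sq_nonneg _)

lemma vnorm_orth {D : ℕ} {A : Matrix (Fin D) (Fin D) ℝ} (hA : Aᵀ * A = 1)
    (x : Fin D → ℝ) : vnorm (A *ᵥ x) = vnorm x := by
  unfold vnorm
  congr 1
  have key : ∀ y : Fin D → ℝ, ∑ i, y i ^ 2 = y ⬝ᵥ y := by
    intro y; simp [dotProduct, sq]
  rw [key, key, Matrix.dotProduct_mulVec, ← Matrix.vecMul_transpose, Matrix.vecMul_vecMul, hA,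
    Matrix.vecMul_one]

lemma vnorm_smul {D : ℕ} (c : ℝ) (x : Fin D → ℝ) : vnorm (c • x) = |c| * vnorm x := by
  unfold vnorm
  have : ∑ i, (c • x) i ^ 2 = c ^ 2 * ∑ i, x i ^ 2 := by
    rw [Finset.mul_sum]; congr 1; ext i; simp [mul_pow]
  rw [this, Real.sqrt_mul (sq_nonneg c), Real.sqrt_sq_eq_abs]

lemma vnorm_neg {D : ℕ} (x : Fin D → ℝ) : vnorm (-x) = vnorm x := by
  have : -x = (-1 : ℝ) • x := by ext i; simp
  rw [this, vnorm_smul]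
  simp

lemma vnorm_pos {D : ℕ} {x : Fin D → ℝ} (hx : x ≠ 0) : 0 < vnorm x := by
  rw [vnorm, Real.sqrt_pos]
  obtain ⟨i, hi⟩ : ∃ i, x i ≠ 0 := by
    by_contra h
    push_neg at h
    exact hx (funext h)
  exact Finset.sum_pos' (fun j _ => sq_nonneg _) ⟨i, Finset.mem_univ i, by positivity⟩

lemma sum_sq_le_one {D : ℕ} {x : Fin D → ℝ} (h : vnorm x ≤ 1) : ∑ i, x i ^ 2 ≤ 1 := by
  rw [← vnorm_sq]
  calc vnorm x ^ 2 ≤ 1 ^ 2 := pow_le_pow_left₀ (vnorm_nonneg x) h 2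
    _ = 1 := one_pow 2

lemma vnorm_diag_le {D : ℕ} {g : Fin D → ℝ} {c : ℝ} (hc0 : 0 ≤ c)
    (hg : ∀ i, |g i| ≤ c) (y : Fin D → ℝ) :
    vnorm (Matrix.diagonal g *ᵥ y) ≤ c * vnorm y := by
  unfold vnorm
  rw [← Real.sqrt_sq hc0, ← Real.sqrt_mul (sq_nonneg c)]
  apply Real.sqrt_le_sqrt
  rw [Finset.mul_sum]
  apply Finset.sum_le_sum
  intro i _
  rw [Matrix.mulVec_diagonal, mul_pow]
  have h1 : g i ^ 2 ≤ c ^ 2 := by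
    rw [← sq_abs]
    exact pow_le_pow_left₀ (abs_nonneg _) (hg i) 2
  exact mul_le_mul_of_nonneg_right h1 (sq_nonneg _)

lemma vnorm_single {D : ℕ} (i : Fin D) : vnorm (Pi.single i 1 : Fin D → ℝ) = 1 := by
  unfold vnorm
  have : ∑ j, (Pi.single i 1 : Fin D → ℝ) j ^ 2 = 1 := by
    rw [Finset.sum_eq_single i]
    · simp
    · intro b _ hb; simp [Pi.single_eq_of_ne hb]
    · simp
  rw [this, Real.sqrt_one]

lemma diag_mulVec_single {D : ℕ} (g : Fin D → ℝ) (i : Fin D) :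
    Matrix.diagonal g *ᵥ (Pi.single i 1 : Fin D → ℝ) = g i • (Pi.single i 1 : Fin D → ℝ) := by
  ext k
  rw [Matrix.mulVec_diagonal]
  by_cases h : k = i
  · subst h; simp
  · simp [Pi.single_eq_of_ne h]

/-! ### Auxiliary lemmas about the spectral norm -/

lemma spectral_bddAbove {D : ℕ} (A : Matrix (Fin D) (Fin D) ℝ) :
    BddAbove {c : ℝ | ∃ x : Fin D → ℝ, vnorm x ≤ 1 ∧ c = vnorm (A.mulVec x)} := by
  refine ⟨Real.sqrt (∑ i, ∑ j, A i j ^ 2), ?_⟩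
  rintro c ⟨x, hx, rfl⟩
  unfold vnorm
  apply Real.sqrt_le_sqrt
  calc ∑ i, (A *ᵥ x) i ^ 2 ≤ ∑ i, ((∑ j, A i j ^ 2) * ∑ j, x j ^ 2) := by
        apply Finset.sum_le_sum
        intro i _
        have := Finset.sum_mul_sq_le_sq_mul_sq Finset.univ (fun j => A i j) x
        simpa [Matrix.mulVec, dotProduct] using this
    _ ≤ ∑ i, ∑ j, A i j ^ 2 := by
        apply Finset.sum_le_sum
        intro i _
        have h1 : 0 ≤ ∑ j, A i j ^ 2 := Finset.sum_nonneg fun _ _ => sq_nonneg _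
        calc (∑ j, A i j ^ 2) * ∑ j, x j ^ 2 ≤ (∑ j, A i j ^ 2) * 1 :=
              mul_le_mul_of_nonneg_left (sum_sq_le_one hx) h1
          _ = _ := mul_one _

lemma spectral_zero_mem {D : ℕ} (A : Matrix (Fin D) (Fin D) ℝ) :
    (0 : ℝ) ∈ {c : ℝ | ∃ x : Fin D → ℝ, vnorm x ≤ 1 ∧ c = vnorm (A.mulVec x)} := by
  refine ⟨0, ?_, ?_⟩
  · simp [vnorm]
  · simp [vnorm, Matrix.mulVec_zero]

lemma isGreatest_spectral_UDVt {D : ℕ} {U V : Matrix (Fin D) (Fin D) ℝ}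
    (hU : Uᵀ * U = 1) (hV : Vᵀ * V = 1) (g : Fin D → ℝ) (c : ℝ) (hc0 : 0 ≤ c)
    (hg : ∀ i, |g i| ≤ c) (hatt : c = 0 ∨ ∃ i, |g i| = c) :
    IsGreatest {b : ℝ | ∃ x : Fin D → ℝ, vnorm x ≤ 1 ∧
      b = vnorm ((U * Matrix.diagonal g * Vᵀ).mulVec x)} c := by
  constructor
  · rcases hatt with rfl | ⟨i, hi⟩
    · refine ⟨0, ?_, ?_⟩
      · simp [vnorm]
      · simp [vnorm, Matrix.mulVec_zero]
    · refine ⟨V *ᵥ (Pi.single i 1 : Fin D → ℝ), ?_, ?_⟩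
      · rw [vnorm_orth hV, vnorm_single]
      · rw [Matrix.mulVec_mulVec, Matrix.mul_assoc (U * Matrix.diagonal g) _ _, hV, Matrix.mul_one,
          ← Matrix.mulVec_mulVec, diag_mulVec_single, Matrix.mulVec_smul, vnorm_smul,
          vnorm_orth hU, vnorm_single, mul_one, hi]
  · rintro b ⟨x, hx, rfl⟩
    have hVVt : (Vᵀ)ᵀ * Vᵀ = 1 := by
      rw [Matrix.transpose_transpose]
      exact mul_eq_one_comm.mp hV
    have h1 : (U * Matrix.diagonal g * Vᵀ) *ᵥ x
        = U *ᵥ (Matrix.diagonal g *ᵥ (Vᵀ *ᵥ x)) := by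
      rw [Matrix.mulVec_mulVec, Matrix.mulVec_mulVec]
    rw [h1, vnorm_orth hU]
    calc vnorm (Matrix.diagonal g *ᵥ (Vᵀ *ᵥ x)) ≤ c * vnorm (Vᵀ *ᵥ x) :=
          vnorm_diag_le hc0 hg _
      _ = c * vnorm x := by rw [vnorm_orth hVVt]
      _ ≤ c * 1 := mul_le_mul_of_nonneg_left hx hc0
      _ = c := mul_one c

/-! ### Auxiliary lemmas about rank -/

lemma rank_add_le' {D : ℕ} (A B : Matrix (Fin D) (Fin D) ℝ) :
    (A + B).rank ≤ A.rank + B.rank := by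
  classical
  have hle : LinearMap.range (A + B).mulVecLin ≤
      LinearMap.range A.mulVecLin ⊔ LinearMap.range B.mulVecLin := by
    rintro y ⟨x, rfl⟩
    rw [Matrix.mulVecLin_add]
    exact Submodule.add_mem_sup (LinearMap.mem_range_self _ x) (LinearMap.mem_range_self _ x)
  calc (A + B).rank
      ≤ Module.finrank ℝ (LinearMap.range A.mulVecLin ⊔ LinearMap.range B.mulVecLin :
          Submodule ℝ (Fin D → ℝ)) := Submodule.finrank_mono hle
    _ ≤ A.rank + B.rank := by
        have := Submodule.finrank_sup_add_finrank_inf_eq (LinearMap.range A.mulVecLin)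
          (LinearMap.range B.mulVecLin)
        unfold Matrix.rank
        omega

lemma card_support_le {D a b : ℕ} (g : Fin D → ℝ)
    (hsupp : ∀ i : Fin D, g i ≠ 0 → a ≤ (i : ℕ) ∧ (i : ℕ) < b) :
    Fintype.card {i : Fin D // g i ≠ 0} ≤ b - a := by
  classical
  rw [Fintype.card_subtype]
  calc (Finset.univ.filter (fun i : Fin D => g i ≠ 0)).card ≤ (Finset.Ico a b).card := by
        apply Finset.card_le_card_of_injOn Fin.val
        · intro i hi
          rw [Finset.mem_coe, Finset.mem_filter] at hi
          have := hsupp i hi.2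
          rw [Finset.mem_coe, Finset.mem_Ico]
          omega
        · intro i _ j _ h
          exact Fin.ext h
    _ = b - a := Nat.card_Ico a b

lemma rank_UDVt_le {D : ℕ} (U V : Matrix (Fin D) (Fin D) ℝ) (g : Fin D → ℝ) :
    (U * Matrix.diagonal g * Vᵀ).rank ≤ Fintype.card {i : Fin D // g i ≠ 0} := by
  classical
  calc (U * Matrix.diagonal g * Vᵀ).rank ≤ (Matrix.diagonal g * Vᵀ).rank := by
        rw [Matrix.mul_assoc]
        exact Matrix.rank_mul_le_right _ _
    _ ≤ (Matrix.diagonal g).rank := Matrix.rank_mul_le_left _ _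
    _ = Fintype.card {i : Fin D // g i ≠ 0} := Matrix.rank_diagonal g

lemma trunc_sub_trunc {D : ℕ} {E : Matrix (Fin D) (Fin D) ℝ} (s : SVD E) (r1 r2 : ℕ) :
    s.trunc r2 - s.trunc r1 = s.U * Matrix.diagonal
      (fun i : Fin D => (if (i : ℕ) < r2 then s.σ i else 0)
        - (if (i : ℕ) < r1 then s.σ i else 0)) * s.Vᵀ := by
  unfold SVD.trunc
  rw [← Matrix.sub_mul, ← Matrix.mul_sub, Matrix.diagonal_sub]

lemma rank_trunc_sub_le {D : ℕ} {E : Matrix (Fin D) (Fin D) ℝ} (s : SVD E) {r1 r2 : ℕ}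
    (h : r1 ≤ r2) : (s.trunc r2 - s.trunc r1).rank ≤ r2 - r1 := by
  rw [trunc_sub_trunc]
  refine (rank_UDVt_le _ _ _).trans (card_support_le _ ?_)
  intro i hi
  constructor
  · by_contra hc
    push_neg at hc
    have h1 : (i : ℕ) < r1 := hc
    have h2 : (i : ℕ) < r2 := lt_of_lt_of_le h1 h
    rw [if_pos h1, if_pos h2, sub_self] at hi
    exact hi rfl
  · by_contra hc
    push_neg at hc
    have h2 : ¬ (i : ℕ) < r2 := by omega
    have h1 : ¬ (i : ℕ) < r1 := by omega
    rw [if_neg h1, if_neg h2, sub_self] at hi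
    exact hi rfl

/-- **Optimal LoRA approximation error for linear models (Lemma 1).**
The minimum of `‖∏_{l=1}^{L}(W_l + ΔW_l) − W̄‖₂` over adapters of rank at most
`R` is attained and equals `σ_{RL+1}(E)` (here `sE.σ (R*L)`, 0-indexed). -/
theorem lora_linear_min_spectral_error (D L : ℕ) (hD : 1 ≤ D) (hL : 1 ≤ L)
    (Wbar : Matrix (Fin D) (Fin D) ℝ) (W : ℕ → Matrix (Fin D) (Fin D) ℝ)
    (E : Matrix (Fin D) (Fin D) ℝ) (hE : E = Wbar - mprod W 1 L)
    (R : ℕ) (hR1 : 1 ≤ R) (hRD : R ≤ D)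
    (sE : SVD E)
    (hWns : ∀ l ∈ Finset.Icc 1 L, (W l).det ≠ 0)
    (hns : ∀ r ≤ R * (L - 1), (mprod W 1 L + sE.trunc r).det ≠ 0) :
    IsLeast
      {c : ℝ | ∃ ΔW : ℕ → Matrix (Fin D) (Fin D) ℝ,
        (∀ l ∈ Finset.Icc 1 L, (ΔW l).rank ≤ R) ∧
        c = mspectralNorm (mprod (fun l => W l + ΔW l) 1 L - Wbar)}
      (sE.σ (R * L)) := by
  classical
  set r : ℕ := R * L with hrdef
  set Wp : Matrix (Fin D) (Fin D) ℝ := mprod W 1 L with hWp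
  have hWbar : Wbar = E + Wp := by rw [hE]; abel
  set g : Fin D → ℝ := fun i =>
    (if (i : ℕ) < r then sE.σ i else 0) - (if (i : ℕ) < D then sE.σ i else 0) with hgdef
  have hσr0 : 0 ≤ sE.σ r := sE.nonneg r
  have hgabs : ∀ i : Fin D, |g i| ≤ sE.σ r := by
    intro i
    have hiD : (i : ℕ) < D := i.isLt
    by_cases h : (i : ℕ) < r
    · have : g i = 0 := by simp [hgdef, h, hiD]
      rw [this, abs_zero]; exact hσr0
    · have : g i = -(sE.σ i) := by simp [hgdef, h, hiD]
      rw [this, abs_neg, abs_of_nonneg (sE.nonneg i)]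
      exact sE.anti r i (by omega)
  have hatt : sE.σ r = 0 ∨ ∃ i : Fin D, |g i| = sE.σ r := by
    by_cases hrD : r < D
    · right
      refine ⟨⟨r, hrD⟩, ?_⟩
      have : g ⟨r, hrD⟩ = -(sE.σ r) := by simp [hgdef, hrD]
      rw [this, abs_neg, abs_of_nonneg hσr0]
    · left; exact sE.tail_zero r (by omega)
  have hfun : (fun i : Fin D => if (i : ℕ) < D then sE.σ i else 0)
      = fun i : Fin D => sE.σ i := funext fun i => if_pos i.isLt
  have hED : E = sE.trunc D := by
    unfold SVD.trunc
    rw [hfun]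
    exact sE.decomp
  have htruncE : sE.trunc r - E = sE.U * Matrix.diagonal g * sE.Vᵀ := by
    calc sE.trunc r - E = sE.trunc r - sE.trunc D := by rw [← hED]
      _ = sE.U * Matrix.diagonal g * sE.Vᵀ := trunc_sub_trunc sE D r
  have hGreat := isGreatest_spectral_UDVt sE.hU sE.hV g (sE.σ r) hσr0 hgabs hatt
  have hdetWp : Wp.det ≠ 0 := det_mprod_ne_zero W (le_refl 1) hWns
  constructor
  · -- membership : the optimal adapters
    set Q : ℕ → Matrix (Fin D) (Fin D) ℝ := fun n => Wp + sE.trunc (R * n) with hQdef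
    set B : ℕ → Matrix (Fin D) (Fin D) ℝ := fun n => mprod W (n + 1) L with hBdef
    set ΔW : ℕ → Matrix (Fin D) (Fin D) ℝ := fun l =>
      (B l)⁻¹ * ((Q l - Q (l - 1)) * (Q (l - 1))⁻¹) * B (l - 1) with hΔdef
    have htr0 : sE.trunc 0 = 0 := by
      unfold SVD.trunc
      have hz : (fun i : Fin D => if (i : ℕ) < 0 then sE.σ i else 0) = fun _ => 0 :=
        funext fun i => if_neg (Nat.not_lt_zero _)
      rw [hz, Matrix.diagonal_zero, Matrix.mul_zero, Matrix.zero_mul]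
    have hQ0 : Q 0 = Wp := by
      have h0 : Q 0 = Wp + sE.trunc (R * 0) := rfl
      rw [h0, Nat.mul_zero, htr0, add_zero]
    have hdetB : ∀ n, (B n).det ≠ 0 := by
      intro n
      apply det_mprod_ne_zero W (by omega)
      intro l hl
      exact hWns l (by rw [Finset.mem_Icc] at hl ⊢; omega)
    have hdetQ : ∀ n, n ≤ L - 1 → (Q n).det ≠ 0 := by
      intro n hn
      exact hns (R * n) (Nat.mul_le_mul (le_refl R) hn)
    have hBL : B L = 1 := mprod_nil W (by omega)
    have hrkΔ : ∀ l ∈ Finset.Icc 1 L, (ΔW l).rank ≤ R := by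
      intro l hl
      rw [Finset.mem_Icc] at hl
      obtain ⟨m, rfl⟩ : ∃ m, l = m + 1 := ⟨l - 1, by omega⟩
      have hΔm : ΔW (m + 1) = (B (m + 1))⁻¹ * ((Q (m + 1) - Q m) * (Q m)⁻¹) * B m := by
        rw [hΔdef]
        simp only [Nat.add_sub_cancel]
      have hQsub : Q (m + 1) - Q m = sE.trunc (R * (m + 1)) - sE.trunc (R * m) := by
        show (Wp + _) - (Wp + _) = _
        abel
      have hR' : R * (m + 1) - R * m = R := by rw [Nat.mul_succ]; omega
      calc (ΔW (m + 1)).rank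
          ≤ ((B (m + 1))⁻¹ * ((Q (m + 1) - Q m) * (Q m)⁻¹)).rank := by
            rw [hΔm]; exact Matrix.rank_mul_le_left _ _
        _ ≤ ((Q (m + 1) - Q m) * (Q m)⁻¹).rank := Matrix.rank_mul_le_right _ _
        _ ≤ (Q (m + 1) - Q m).rank := Matrix.rank_mul_le_left _ _
        _ ≤ R := by
            rw [hQsub]
            exact (rank_trunc_sub_le sE (Nat.mul_le_mul (le_refl R) (by omega))).trans
              (le_of_eq hR')
    have hpartial : ∀ n, n ≤ L → mprod (fun l => W l + ΔW l) 1 n = (B n)⁻¹ * Q n := by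
      intro n
      induction n with
      | zero =>
        intro _
        rw [mprod_nil _ (by omega)]
        have hB0 : B 0 = Wp := rfl
        rw [hB0, hQ0]
        exact (Matrix.nonsing_inv_mul Wp (Ne.isUnit hdetWp)).symm
      | succ n ih =>
        intro hn1
        rw [mprod_succ _ (by omega), ih (by omega)]
        show (W (n + 1) + ΔW (n + 1)) * ((B n)⁻¹ * Q n) = (B (n + 1))⁻¹ * Q (n + 1)
        have hWdet : (W (n + 1)).det ≠ 0 := hWns (n + 1) (Finset.mem_Icc.mpr ⟨by omega, hn1⟩)
        have hBrel : B n = B (n + 1) * W (n + 1) := by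
          show mprod W (n + 1) L = mprod W (n + 1 + 1) L * W (n + 1)
          exact mprod_cons W hn1
        have hQn : (Q n).det ≠ 0 := hdetQ n (by omega)
        have hΔn : ΔW (n + 1) = (B (n + 1))⁻¹ * ((Q (n + 1) - Q n) * (Q n)⁻¹) * B n := by
          rw [hΔdef]
          simp only [Nat.add_sub_cancel]
        have e2 : W (n + 1) * (B n)⁻¹ = (B (n + 1))⁻¹ := by
          rw [hBrel, Matrix.mul_inv_rev, ← Matrix.mul_assoc,
            Matrix.mul_nonsing_inv _ (Ne.isUnit hWdet), Matrix.one_mul]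
        have t1 : W (n + 1) * ((B n)⁻¹ * Q n) = (B (n + 1))⁻¹ * Q n := by
          rw [← Matrix.mul_assoc, e2]
        have t2 : (B (n + 1))⁻¹ * ((Q (n + 1) - Q n) * (Q n)⁻¹) * B n * ((B n)⁻¹ * Q n)
            = (B (n + 1))⁻¹ * (Q (n + 1) - Q n) := by
          rw [Matrix.mul_assoc _ (B n) _, ← Matrix.mul_assoc (B n) _ _,
            Matrix.mul_nonsing_inv _ (Ne.isUnit (hdetB n)), Matrix.one_mul,
            Matrix.mul_assoc _ _ (Q n), Matrix.mul_assoc _ (Q n)⁻¹ (Q n),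
            Matrix.nonsing_inv_mul _ (Ne.isUnit hQn), Matrix.mul_one]
        rw [Matrix.add_mul, hΔn, t1, t2, ← Matrix.mul_add]
        congr 1
        abel
    refine ⟨ΔW, hrkΔ, ?_⟩
    have hfinal : mprod (fun l => W l + ΔW l) 1 L - Wbar
        = sE.U * Matrix.diagonal g * sE.Vᵀ := by
      rw [hpartial L (le_refl L), hBL]
      have h1 : (1 : Matrix (Fin D) (Fin D) ℝ)⁻¹ = 1 := by simp
      rw [h1, Matrix.one_mul]
      have h2 : Q L = Wp + sE.trunc r := by rw [hQdef, hrdef]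
      rw [h2, hWbar]
      calc Wp + sE.trunc r - (E + Wp) = sE.trunc r - E := by abel
        _ = _ := htruncE
    rw [hfinal]
    exact (hGreat.csSup_eq).symm
  · -- lower bound
    rintro c ⟨ΔW, hrk, rfl⟩
    set f : ℕ → Matrix (Fin D) (Fin D) ℝ := fun l => W l + ΔW l with hfdef
    set A : Matrix (Fin D) (Fin D) ℝ := mprod f 1 L - Wbar with hAdef
    set M : Matrix (Fin D) (Fin D) ℝ := mprod f 1 L - Wp with hMdef
    have hAM : A = M - E := by rw [hAdef, hMdef, hWbar]; abel
    have hrankM : ∀ n, n ≤ L → (mprod f 1 n - mprod W 1 n).rank ≤ R * n := by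
      intro n
      induction n with
      | zero =>
        intro _
        rw [mprod_nil f (by omega), mprod_nil W (by omega), sub_self]
        simp
      | succ n ih =>
        intro hn1
        have hstep : mprod f 1 (n + 1) - mprod W 1 (n + 1)
            = W (n + 1) * (mprod f 1 n - mprod W 1 n) + ΔW (n + 1) * mprod f 1 n := by
          rw [mprod_succ f (by omega), mprod_succ W (by omega)]
          have hf1 : f (n + 1) = W (n + 1) + ΔW (n + 1) := rfl
          rw [hf1, Matrix.mul_sub, Matrix.add_mul]
          abel
        rw [hstep, Nat.mul_succ]
        calc (W (n + 1) * (mprod f 1 n - mprod W 1 n) + ΔW (n + 1) * mprod f 1 n).rank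
            ≤ (W (n + 1) * (mprod f 1 n - mprod W 1 n)).rank
              + (ΔW (n + 1) * mprod f 1 n).rank := rank_add_le' _ _
          _ ≤ R * n + R := by
              have h1 := (Matrix.rank_mul_le_right (W (n + 1))
                (mprod f 1 n - mprod W 1 n)).trans (ih (by omega))
              have h2 := (Matrix.rank_mul_le_left (ΔW (n + 1)) (mprod f 1 n)).trans
                (hrk (n + 1) (Finset.mem_Icc.mpr ⟨by omega, hn1⟩))
              omega
    have hMrank : M.rank ≤ r := by
      rw [hMdef, hrdef, hWp]
      exact hrankM L (le_refl L)
    by_cases hrD : r < D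
    · set P : Matrix (Fin D) (Fin D) ℝ :=
        Matrix.diagonal (fun i : Fin D => if (i : ℕ) < r + 1 then (0:ℝ) else 1) * sE.Vᵀ
        with hPdef
      have hrankP : P.rank ≤ D - (r + 1) := by
        calc P.rank
            ≤ (Matrix.diagonal (fun i : Fin D => if (i : ℕ) < r + 1 then (0:ℝ) else 1)).rank :=
              Matrix.rank_mul_le_left _ _
          _ = Fintype.card {i : Fin D // (if (i : ℕ) < r + 1 then (0:ℝ) else 1) ≠ 0} :=
              Matrix.rank_diagonal _
          _ ≤ D - (r + 1) := by
              apply card_support_le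
              intro i hi
              refine ⟨?_, i.isLt⟩
              by_contra hc
              push_neg at hc
              rw [if_pos (by omega)] at hi
              exact hi rfl
      have hDfin : Module.finrank ℝ (Fin D → ℝ) = D := by
        rw [Module.finrank_fintype_fun_eq_card, Fintype.card_fin]
      have hK := LinearMap.finrank_range_add_finrank_ker M.mulVecLin
      have hS := LinearMap.finrank_range_add_finrank_ker P.mulVecLin
      rw [hDfin] at hK hS
      have hrM : Module.finrank ℝ (LinearMap.range M.mulVecLin) = M.rank := rfl
      have hrP : Module.finrank ℝ (LinearMap.range P.mulVecLin) = P.rank := rfl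
      rw [hrM] at hK
      rw [hrP] at hS
      have hsum := Submodule.finrank_sup_add_finrank_inf_eq
        (LinearMap.ker M.mulVecLin) (LinearMap.ker P.mulVecLin)
      have hsupD : Module.finrank ℝ
          ((LinearMap.ker M.mulVecLin ⊔ LinearMap.ker P.mulVecLin :
            Submodule ℝ (Fin D → ℝ))) ≤ D :=
        (Submodule.finrank_le _).trans (le_of_eq hDfin)
      have hinf : 0 < Module.finrank ℝ
          ((LinearMap.ker M.mulVecLin ⊓ LinearMap.ker P.mulVecLin :
            Submodule ℝ (Fin D → ℝ))) := by
        omega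
      have hnebot : (LinearMap.ker M.mulVecLin ⊓ LinearMap.ker P.mulVecLin :
          Submodule ℝ (Fin D → ℝ)) ≠ ⊥ := by
        intro hbot
        rw [hbot, finrank_bot] at hinf
        exact lt_irrefl 0 hinf
      obtain ⟨x, hxmem, hx0⟩ := Submodule.ne_bot_iff _ |>.mp hnebot
      obtain ⟨hxK, hxS⟩ := Submodule.mem_inf.mp hxmem
      rw [LinearMap.mem_ker] at hxK hxS
      have hMx : M *ᵥ x = 0 := by rwa [Matrix.mulVecLin_apply] at hxK
      have hPx : P *ᵥ x = 0 := by rwa [Matrix.mulVecLin_apply] at hxS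
      set y : Fin D → ℝ := sE.Vᵀ *ᵥ x with hydef
      have hytail : ∀ i : Fin D, r + 1 ≤ (i : ℕ) → y i = 0 := by
        intro i hi
        have h1 : (P *ᵥ x) i = 0 := by rw [hPx]; rfl
        rw [hPdef, ← Matrix.mulVec_mulVec, Matrix.mulVec_diagonal, if_neg (by omega)] at h1
        simpa using h1
      have hVVt : (sE.Vᵀ)ᵀ * sE.Vᵀ = 1 := by
        rw [Matrix.transpose_transpose]
        exact mul_eq_one_comm.mp sE.hV
      have hyx : vnorm y = vnorm x := vnorm_orth hVVt x
      have hvx : 0 < vnorm x := vnorm_pos hx0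
      have hExval : E *ᵥ x = sE.U *ᵥ (Matrix.diagonal (fun i : Fin D => sE.σ i) *ᵥ y) := by
        conv_lhs => rw [sE.decomp]
        rw [Matrix.mulVec_mulVec, Matrix.mulVec_mulVec]
      have hExlow : sE.σ r * vnorm x ≤ vnorm (E *ᵥ x) := by
        rw [hExval, vnorm_orth sE.hU, ← hyx]
        unfold vnorm
        rw [← Real.sqrt_sq hσr0, ← Real.sqrt_mul (sq_nonneg _)]
        apply Real.sqrt_le_sqrt
        rw [Finset.mul_sum]
        apply Finset.sum_le_sum
        intro i _
        rw [Matrix.mulVec_diagonal, mul_pow]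
        by_cases hir : (i : ℕ) ≤ r
        · have h1 : sE.σ r ^ 2 ≤ sE.σ i ^ 2 :=
            pow_le_pow_left₀ hσr0 (sE.anti i r hir) 2
          exact mul_le_mul_of_nonneg_right h1 (sq_nonneg _)
        · rw [hytail i (by omega)]
          simp
      have hAx : A *ᵥ x = -(E *ᵥ x) := by
        rw [hAM, Matrix.sub_mulVec, hMx, zero_sub]
      set x' : Fin D → ℝ := (vnorm x)⁻¹ • x with hx'def
      have hx'1 : vnorm x' ≤ 1 := by
        rw [hx'def, vnorm_smul, abs_of_nonneg (inv_nonneg.mpr hvx.le),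
          inv_mul_cancel₀ hvx.ne']
      have hval : sE.σ r ≤ vnorm (A *ᵥ x') := by
        rw [hx'def, Matrix.mulVec_smul, vnorm_smul, abs_of_nonneg (inv_nonneg.mpr hvx.le),
          hAx, vnorm_neg]
        calc sE.σ r = (vnorm x)⁻¹ * (sE.σ r * vnorm x) := by
              field_simp
          _ ≤ (vnorm x)⁻¹ * vnorm (E *ᵥ x) :=
              mul_le_mul_of_nonneg_left hExlow (inv_nonneg.mpr hvx.le)
      exact hval.trans (le_csSup (spectral_bddAbove A) ⟨x', hx'1, rfl⟩)
    · have hz : sE.σ r = 0 := sE.tail_zero r (by omega)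
      rw [hz]
      exact le_csSup (spectral_bddAbove A) (spectral_zero_mem A)

end
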